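/- arXiv:2110.15185 — 6 statements merged into one kernel-verified Lean document; each statement's English description precedes it below -/
import Mathlib

section
/- Suppose a family of nonnegative reals (a_v^{p_1,…,p_k}), indexed by k ≥ 1, perimeters p_i ≥ 1 and inner volume v ≥ 0, satisfies the peeling equations a_v^{p_1,…,p_k} = a_v^{p_1+1,p_2,…,p_k} + 2 Σ_{i=0}^{p_1-1} Σ_{j≥0} τ_j(i+1) a_{v+j}^{p_1-i,p_2,…,p_k} + Σ_{i=0}^{p_1-1} a_v^{i+1,p_1-i,p_2,…,p_k}. Then the full family is determined by the values a_v^{1,…,1} (all perimeters equal to 1), for all numbers of holes k ≥ 1 and all v ≥ 0. -/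
/-!
Induct on the total excess `Σ (pᵢ - 1)` of the perimeters. If every perimeter is `1` the two
families agree by assumption. Otherwise some perimeter is `p₁ + 1` with `p₁ ≥ 1`, and the
peeling equation at `p₁` expresses `a_v^{p₁+1,…}` through `a^{p₁,…}` at all volumes,
`a^{p₁-i,…}` at all volumes and `a_v^{i+1,p₁-i,…}`, all of which have smaller excess.
-/

/-- The peeling equations for a family `a` of reals indexed by the (unordered) multiset
of hole perimeters and the inner volume, with `τ (i+1) j` the number of triangulations
of the `(i+1)`-gon with `j+1` vertices in total. -/
def SatisfiesPeeling (τ : ℕ → ℕ → ℝ) (a : Multiset ℕ → ℕ → ℝ) : Prop :=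
  ∀ (p₁ : ℕ), 1 ≤ p₁ → ∀ rest : Multiset ℕ, (∀ q ∈ rest, 1 ≤ q) → ∀ v : ℕ,
    a (p₁ ::ₘ rest) v =
      a ((p₁ + 1) ::ₘ rest) v
      + 2 * ∑ i ∈ Finset.range p₁, ∑' j : ℕ, τ (i + 1) j * a ((p₁ - i) ::ₘ rest) (v + j)
      + ∑ i ∈ Finset.range p₁, a ((i + 1) ::ₘ ((p₁ - i) ::ₘ rest)) v

def perimeterExcess (m : Multiset ℕ) : ℕ :=
  (m.map (· - 1)).sum

@[simp]
theorem perimeterExcess_cons (p : ℕ) (m : Multiset ℕ) :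
    perimeterExcess (p ::ₘ m) = (p - 1) + perimeterExcess m := by
  simp [perimeterExcess]

theorem SatisfiesPeeling.apply_succ_cons_eq {τ : ℕ → ℕ → ℝ} {a a' : Multiset ℕ → ℕ → ℝ}
    (hpeel : SatisfiesPeeling τ a) (hpeel' : SatisfiesPeeling τ a')
    {p₁ : ℕ} (hp₁ : 1 ≤ p₁) {rest : Multiset ℕ} (hrest : ∀ q ∈ rest, 1 ≤ q)
    (hlt : ∀ m, m ≠ 0 → (∀ q ∈ m, 1 ≤ q) →
      perimeterExcess m < perimeterExcess ((p₁ + 1) ::ₘ rest) → ∀ w, a m w = a' m w)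
    (v : ℕ) :
    a ((p₁ + 1) ::ₘ rest) v = a' ((p₁ + 1) ::ₘ rest) v := by
  have hfirst : ∀ x, 1 ≤ x → x ≤ p₁ → ∀ w, a (x ::ₘ rest) w = a' (x ::ₘ rest) w :=
    fun x hx₁ hx₂ => hlt _ (Multiset.cons_ne_zero) (Multiset.forall_mem_cons.2 ⟨hx₁, hrest⟩)
      (by simp only [perimeterExcess_cons]; omega)
  have hsplit : ∀ i ∈ Finset.range p₁,
      a ((i + 1) ::ₘ (p₁ - i) ::ₘ rest) v = a' ((i + 1) ::ₘ (p₁ - i) ::ₘ rest) v := by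
    intro i hi
    have hi : i < p₁ := Finset.mem_range.1 hi
    refine hlt _ (Multiset.cons_ne_zero)
      (Multiset.forall_mem_cons.2 ⟨by omega, Multiset.forall_mem_cons.2 ⟨by omega, hrest⟩⟩)
      (by simp only [perimeterExcess_cons]; omega) v
  have hinner : ∑ i ∈ Finset.range p₁, ∑' j, τ (i + 1) j * a ((p₁ - i) ::ₘ rest) (v + j)
      = ∑ i ∈ Finset.range p₁, ∑' j, τ (i + 1) j * a' ((p₁ - i) ::ₘ rest) (v + j) := by
    refine Finset.sum_congr rfl fun i hi => tsum_congr fun j => ?_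
    have hi : i < p₁ := Finset.mem_range.1 hi
    rw [hfirst (p₁ - i) (by omega) (by omega)]
  have e := hpeel p₁ hp₁ rest hrest v
  have e' := hpeel' p₁ hp₁ rest hrest v
  rw [hinner, Finset.sum_congr rfl hsplit, hfirst p₁ hp₁ le_rfl] at e
  linarith

theorem peeling_determined_by_ones_general
    (τ : ℕ → ℕ → ℝ)
    (a a' : Multiset ℕ → ℕ → ℝ)
    (hpeel : SatisfiesPeeling τ a) (hpeel' : SatisfiesPeeling τ a')
    (hones : ∀ (k : ℕ), 1 ≤ k → ∀ v : ℕ,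
      a (Multiset.replicate k 1) v = a' (Multiset.replicate k 1) v) :
    ∀ m : Multiset ℕ, m ≠ 0 → (∀ q ∈ m, 1 ≤ q) → ∀ v : ℕ, a m v = a' m v := by
  intro m
  induction hn : perimeterExcess m using Nat.strong_induction_on generalizing m with
  | _ n ih =>
    intro hm₀ hm₁ v
    by_cases hall : ∀ q ∈ m, q = 1
    · rw [Multiset.eq_replicate_card.2 hall]
      exact hones _ (Multiset.card_pos.2 hm₀) v
    · push Not at hall
      obtain ⟨p, hpm, hp⟩ := hall
      obtain ⟨p₁, rfl⟩ : ∃ p₁, p = p₁ + 1 := ⟨p - 1, by have := hm₁ p hpm; omega⟩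
      rw [← Multiset.cons_erase hpm] at hn hm₁ ⊢
      exact hpeel.apply_succ_cons_eq hpeel' (by omega)
        (fun q hq => hm₁ q (Multiset.mem_cons_of_mem hq))
        (fun m' hm'₀ hm'₁ hlt => ih _ (hn ▸ hlt) m' rfl hm'₀ hm'₁) v

/-- Suppose a family of nonnegative reals `a_v^{p₁,…,p_k}` satisfies the
peeling equations.  Then the full family is determined by the values `a_v^{1,…,1}`
(all perimeters equal to `1`), for all numbers of holes `k ≥ 1` and all volumes `v ≥ 0`:
any two such families agreeing on all-ones perimeters agree everywhere. -/
theorem peeling_determined_by_ones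
    (τ : ℕ → ℕ → ℝ) (hτ : ∀ i j, 0 ≤ τ i j)
    (a a' : Multiset ℕ → ℕ → ℝ)
    (ha : ∀ m v, 0 ≤ a m v) (ha' : ∀ m v, 0 ≤ a' m v)
    (hpeel : SatisfiesPeeling τ a) (hpeel' : SatisfiesPeeling τ a')
    (hones : ∀ (k : ℕ), 1 ≤ k → ∀ v : ℕ,
      a (Multiset.replicate k 1) v = a' (Multiset.replicate k 1) v) :
    ∀ m : Multiset ℕ, m ≠ 0 → (∀ q ∈ m, 1 ≤ q) → ∀ v : ℕ, a m v = a' m v :=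
  peeling_determined_by_ones_general τ a a' hpeel hpeel' hones
end

section
/- Let (a_v^{p_1,…,p_k}) be nonnegative reals satisfying the peeling equations. Then for all m, n, v ≥ 0 and all perimeters p_1, …, p_k ≥ 1, the iterated discrete derivative Δ_v^m Δ_k^n a_v^{p_1,…,p_k} is nonnegative, where Δ_v takes the difference in v and Δ_k appends a hole of perimeter 1. -/
/-- The discrete derivative in the volume: `(Δ_v a)_v = a_v - a_{v+1}`. -/
def deltaV (a : Multiset ℕ → ℕ → ℝ) : Multiset ℕ → ℕ → ℝ :=
  fun m v => a m v - a m (v + 1)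

/-- The discrete derivative in the number of holes (appending a hole of perimeter `1`):
`(Δ_k a)^{p₁,…,p_k} = a^{p₁,…,p_k} - a^{p₁,…,p_k,1}`. -/
def deltaK (a : Multiset ℕ → ℕ → ℝ) : Multiset ℕ → ℕ → ℝ :=
  fun m v => a m v - a (1 ::ₘ m) v

/-!
`Δ_v b` and `Δ_k b` are differences of `b` with its volume shift `b_{v+1}` and with `b` carrying
an extra hole of perimeter `1`. The peeling equations are linear and stable under both
operations, so every iterated derivative of `a` again solves them, and by induction it suffices
to show that `Δ_v b, Δ_k b ≥ 0` for every nonnegative solution `b`. In the peeling equation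
for `b_v^{p,…}` all terms are nonnegative; the term `i = p - 1` of the last sum is
`b_v^{p,…,1}`, and the term `i = 0, j = 1` of the double sum is at least
`τ_1(1) b_{v+1}^{p,…} ≥ b_{v+1}^{p,…}`.
-/

def PeelingSeriesSummable (τ : ℕ → ℕ → ℝ) (b : Multiset ℕ → ℕ → ℝ) : Prop :=
  ∀ (i : ℕ) (m : Multiset ℕ) (v : ℕ), Summable fun j : ℕ => τ i j * b m (v + j)

def shiftVolume (b : Multiset ℕ → ℕ → ℝ) : Multiset ℕ → ℕ → ℝ :=
  fun m v => b m (v + 1)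

def addUnitHole (b : Multiset ℕ → ℕ → ℝ) : Multiset ℕ → ℕ → ℝ :=
  fun m v => b (1 ::ₘ m) v

def NonnegOnPerimeters (b : Multiset ℕ → ℕ → ℝ) : Prop :=
  ∀ p, 1 ≤ p → ∀ rest : Multiset ℕ, (∀ q ∈ rest, 1 ≤ q) → ∀ v, 0 ≤ b (p ::ₘ rest) v

structure IsNonnegPeelingSolution (τ : ℕ → ℕ → ℝ) (b : Multiset ℕ → ℕ → ℝ) : Prop where
  peeling : SatisfiesPeeling τ b
  summable : PeelingSeriesSummable τ b
  nonneg : NonnegOnPerimeters b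

theorem deltaV_eq_sub (b : Multiset ℕ → ℕ → ℝ) : deltaV b = b - shiftVolume b := rfl

theorem deltaK_eq_sub (b : Multiset ℕ → ℕ → ℝ) : deltaK b = b - addUnitHole b := rfl

section

variable {τ : ℕ → ℕ → ℝ} {b c : Multiset ℕ → ℕ → ℝ}

namespace PeelingSeriesSummable

theorem sub (hb : PeelingSeriesSummable τ b) (hc : PeelingSeriesSummable τ c) :
    PeelingSeriesSummable τ (b - c) := fun i m v =>
  ((hb i m v).sub (hc i m v)).congr fun j => by simp only [Pi.sub_apply, mul_sub]

theorem shiftVolume (hb : PeelingSeriesSummable τ b) :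
    PeelingSeriesSummable τ (shiftVolume b) := fun i m v =>
  (hb i m (v + 1)).congr fun j => by simp only [_root_.shiftVolume, add_right_comm v 1 j]

theorem addUnitHole (hb : PeelingSeriesSummable τ b) :
    PeelingSeriesSummable τ (addUnitHole b) := fun i m v => hb i (1 ::ₘ m) v

end PeelingSeriesSummable

namespace SatisfiesPeeling

theorem sub (hb : SatisfiesPeeling τ b) (hc : SatisfiesPeeling τ c)
    (hb_sum : PeelingSeriesSummable τ b) (hc_sum : PeelingSeriesSummable τ c) :
    SatisfiesPeeling τ (b - c) := by
  intro p hp rest hrest v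
  have htsum : ∀ i m, ∑' j : ℕ, τ i j * (b - c) m (v + j)
      = ∑' j : ℕ, τ i j * b m (v + j) - ∑' j : ℕ, τ i j * c m (v + j) := fun i m => by
    simp only [Pi.sub_apply, mul_sub]
    exact (hb_sum i m v).tsum_sub (hc_sum i m v)
  simp only [htsum]
  simp only [Pi.sub_apply, hb p hp rest hrest v, hc p hp rest hrest v,
    Finset.sum_sub_distrib]
  ring

theorem shiftVolume (hb : SatisfiesPeeling τ b) : SatisfiesPeeling τ (shiftVolume b) := by
  intro p hp rest hrest v
  simpa only [_root_.shiftVolume, add_right_comm v 1] using hb p hp rest hrest (v + 1)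

theorem addUnitHole (hb : SatisfiesPeeling τ b) : SatisfiesPeeling τ (addUnitHole b) := by
  intro p hp rest hrest v
  simpa only [_root_.addUnitHole, Multiset.cons_swap _ 1] using
    hb p hp (1 ::ₘ rest) (Multiset.forall_mem_cons.2 ⟨le_rfl, hrest⟩) v

variable {p : ℕ} {rest : Multiset ℕ}

theorem cons_one_le (hb : SatisfiesPeeling τ b) (hτ : ∀ i j, 0 ≤ τ i j)
    (hnn : NonnegOnPerimeters b) (hp : 1 ≤ p) (hrest : ∀ q ∈ rest, 1 ≤ q) (v : ℕ) :
    b (1 ::ₘ p ::ₘ rest) v ≤ b (p ::ₘ rest) v := by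
  obtain ⟨k, rfl⟩ := Nat.exists_eq_add_of_le' hp
  have hlast : b (1 ::ₘ (k + 1) ::ₘ rest) v
      ≤ ∑ i ∈ Finset.range (k + 1), b ((i + 1) ::ₘ (k + 1 - i) ::ₘ rest) v := by
    have := Finset.single_le_sum (f := fun i => b ((i + 1) ::ₘ (k + 1 - i) ::ₘ rest) v)
      (fun i hi => hnn _ (by omega) _
        (Multiset.forall_mem_cons.2 ⟨by simp at hi; omega, hrest⟩) v)
      (Finset.self_mem_range_succ k)
    rwa [Nat.add_sub_cancel_left, Multiset.cons_swap] at this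
  have hpeeled : 0 ≤ b ((k + 1 + 1) ::ₘ rest) v := hnn _ (by omega) _ hrest v
  have hseries : 0 ≤ ∑ i ∈ Finset.range (k + 1),
      ∑' j : ℕ, τ (i + 1) j * b ((k + 1 - i) ::ₘ rest) (v + j) :=
    Finset.sum_nonneg fun i hi => tsum_nonneg fun j =>
      mul_nonneg (hτ _ _) (hnn _ (by simp at hi; omega) _ hrest _)
  linarith [hb (k + 1) hp rest hrest v]

theorem volume_succ_le (hb : SatisfiesPeeling τ b) (hτ : ∀ i j, 0 ≤ τ i j) (hτ11 : 1 ≤ τ 1 1)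
    (hsum : PeelingSeriesSummable τ b) (hnn : NonnegOnPerimeters b) (hp : 1 ≤ p)
    (hrest : ∀ q ∈ rest, 1 ≤ q) (v : ℕ) :
    b (p ::ₘ rest) (v + 1) ≤ b (p ::ₘ rest) v := by
  have hfirst : ∑' j : ℕ, τ 1 j * b (p ::ₘ rest) (v + j)
      ≤ ∑ i ∈ Finset.range p, ∑' j : ℕ, τ (i + 1) j * b ((p - i) ::ₘ rest) (v + j) := by
    have := Finset.single_le_sum
      (f := fun i => ∑' j : ℕ, τ (i + 1) j * b ((p - i) ::ₘ rest) (v + j))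
      (fun i hi => tsum_nonneg fun j =>
        mul_nonneg (hτ _ _) (hnn _ (by simp at hi; omega) _ hrest _))
      (Finset.mem_range.2 hp)
    simpa only [zero_add, Nat.sub_zero] using this
  have hshift : b (p ::ₘ rest) (v + 1) ≤ ∑' j : ℕ, τ 1 j * b (p ::ₘ rest) (v + j) :=
    calc b (p ::ₘ rest) (v + 1) ≤ τ 1 1 * b (p ::ₘ rest) (v + 1) :=
          le_mul_of_one_le_left (hnn p hp rest hrest _) hτ11
      _ ≤ _ := (hsum 1 _ v).le_tsum 1 fun j _ => mul_nonneg (hτ _ _) (hnn p hp rest hrest _)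
  have hpeeled : 0 ≤ b ((p + 1) ::ₘ rest) v := hnn _ (by omega) _ hrest v
  have hsplit : 0 ≤ ∑ i ∈ Finset.range p, b ((i + 1) ::ₘ (p - i) ::ₘ rest) v :=
    Finset.sum_nonneg fun i hi =>
      hnn _ (by omega) _ (Multiset.forall_mem_cons.2 ⟨by simp at hi; omega, hrest⟩) v
  linarith [hb p hp rest hrest v, hnn p hp rest hrest (v + 1)]

theorem nonnegOnPerimeters_deltaK (hb : SatisfiesPeeling τ b) (hτ : ∀ i j, 0 ≤ τ i j)
    (hnn : NonnegOnPerimeters b) : NonnegOnPerimeters (deltaK b) :=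
  fun _ hp _ hrest v => sub_nonneg.2 (hb.cons_one_le hτ hnn hp hrest v)

theorem nonnegOnPerimeters_deltaV (hb : SatisfiesPeeling τ b) (hτ : ∀ i j, 0 ≤ τ i j)
    (hτ11 : 1 ≤ τ 1 1) (hsum : PeelingSeriesSummable τ b) (hnn : NonnegOnPerimeters b) :
    NonnegOnPerimeters (deltaV b) :=
  fun _ hp _ hrest v => sub_nonneg.2 (hb.volume_succ_le hτ hτ11 hsum hnn hp hrest v)

end SatisfiesPeeling

namespace IsNonnegPeelingSolution

theorem deltaK (h : IsNonnegPeelingSolution τ b) (hτ : ∀ i j, 0 ≤ τ i j) :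
    IsNonnegPeelingSolution τ (deltaK b) where
  peeling := deltaK_eq_sub b ▸ h.peeling.sub h.peeling.addUnitHole h.summable
    h.summable.addUnitHole
  summable := deltaK_eq_sub b ▸ h.summable.sub h.summable.addUnitHole
  nonneg := h.peeling.nonnegOnPerimeters_deltaK hτ h.nonneg

theorem deltaV (h : IsNonnegPeelingSolution τ b) (hτ : ∀ i j, 0 ≤ τ i j) (hτ11 : 1 ≤ τ 1 1) :
    IsNonnegPeelingSolution τ (deltaV b) where
  peeling := deltaV_eq_sub b ▸ h.peeling.sub h.peeling.shiftVolume h.summable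
    h.summable.shiftVolume
  summable := deltaV_eq_sub b ▸ h.summable.sub h.summable.shiftVolume
  nonneg := h.peeling.nonnegOnPerimeters_deltaV hτ hτ11 h.summable h.nonneg

end IsNonnegPeelingSolution

end

/-- Let `a_v^{p₁,…,p_k}` be nonnegative reals satisfying the peeling
equations.  Then all iterated discrete derivatives `Δ_v^m Δ_k^n a_v^{p₁,…,p_k}` are
nonnegative. -/
theorem iterated_derivatives_nonneg
    (τ : ℕ → ℕ → ℝ) (hτ : ∀ i j, 0 ≤ τ i j) (hτ11 : 1 ≤ τ 1 1)
    (a : Multiset ℕ → ℕ → ℝ) (ha : ∀ m v, 0 ≤ a m v)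
    (hsum : ∀ (i : ℕ) (m : Multiset ℕ) (v : ℕ),
      Summable fun j : ℕ => τ i j * a m (v + j))
    (hpeel : SatisfiesPeeling τ a) :
    ∀ (m n : ℕ) (P : Multiset ℕ), P ≠ 0 → (∀ q ∈ P, 1 ≤ q) → ∀ v : ℕ,
      0 ≤ (deltaV^[m] (deltaK^[n] a)) P v := by
  intro m n P hP hPq v
  have ha_sol : IsNonnegPeelingSolution τ a := ⟨hpeel, hsum, fun _ _ _ _ v => ha _ v⟩
  have hsol : IsNonnegPeelingSolution τ (deltaV^[m] (deltaK^[n] a)) :=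
    Function.Iterate.rec _ (Function.Iterate.rec _ ha_sol (fun _ h => h.deltaK hτ) n)
      (fun _ h => h.deltaV hτ hτ11) m
  obtain ⟨p, hp⟩ := Multiset.exists_mem_of_ne_zero hP
  obtain ⟨rest, rfl⟩ := Multiset.exists_cons_of_mem hp
  obtain ⟨hp1, hrest⟩ := Multiset.forall_mem_cons.1 hPq
  exact hsol.nonneg p hp1 rest hrest v
end

section
/- For every γ with 0 < γ < 1, there exists p ≥ 1 such that C_p(0,γ) < 0, where C_p(0,γ) is defined by C_1(0,γ)=1 and C_p(0,γ) = C_{p+1}(0,γ) + γ Σ_{i=0}^{p-1} C_{i+1}(0,γ) C_{p-i}(0,γ). -/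
/-!
Put `t = 1 - 2γ`. The generating series `F = ∑_{p ≥ 1} C_p x^p` satisfies
`γ F² + (1 - x) F = x`, so `Y = 1 - x + 2γ F` satisfies `Y² = 1 - 2 t x + x²`. Differentiating,
`2 (1 - 2 t x + x²) Y' = (2x - 2t) Y`, and comparing coefficients gives the Legendre-type
recurrence `(n + 3) C_{n+3} = t (2n + 3) C_{n+2} - n C_{n+1}`.

If all `C_p` were nonnegative they would all be positive, and since `|t| < 1`, for large `n` the
recurrence gives `C_{n+2} ≤ 2 |t| C_{n+1} - c C_n` with `|t|² < c`. The ratios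
`r_n = C_{n+1} / C_n` then satisfy `r_{n+1} ≤ r_n - (c - |t|²) / r_n`, so they decrease at least
by a fixed amount at each step and eventually become negative.
-/

namespace PowerSeries

theorem two_mul_mul_derivative_of_sq_eq {R : Type*} [CommRing R] {Y Q : R⟦X⟧} (h : Y ^ 2 = Q) :
    2 * Q * d⁄dX R Y = d⁄dX R Q * Y := by
  rw [← h, derivative_pow]
  ring

theorem coeff_recurrence_of_sq_eq {K : Type*} [Field K] [CharZero K] {t : K} {Y : K⟦X⟧}
    (h : Y ^ 2 = 1 - 2 * C t * X + X ^ 2) (n : ℕ) :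
    ((n : K) + 3) * coeff (n + 3) Y
      = t * (2 * n + 3) * coeff (n + 2) Y - n * coeff (n + 1) Y := by
  have hQ : d⁄dX K (1 - 2 * C t * X + X ^ 2) = C (-2 * t) + C 2 * X := by
    rw [show (2 : K⟦X⟧) * C t = C (2 * t) by rw [map_mul, map_ofNat]]
    simp only [map_add, map_sub, derivative_one, derivative_C, Derivation.leibniz, derivative_X,
      derivative_pow, smul_eq_mul]
    simp only [map_mul, map_neg, map_ofNat]
    ring
  have hD := two_mul_mul_derivative_of_sq_eq h
  rw [hQ] at hD
  have hD' : C 2 * d⁄dX K Y + C (-4 * t) * (X * d⁄dX K Y) + C 2 * (X * (X * d⁄dX K Y))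
      = C (-2 * t) * Y + C 2 * (X * Y) := by
    simp only [map_mul, map_neg, map_ofNat] at hD ⊢
    linear_combination hD
  have hc := congrArg (coeff (n + 2)) hD'
  simp only [map_add, coeff_C_mul, coeff_succ_X_mul, coeff_derivative] at hc
  push_cast at hc
  linear_combination hc / 2

end PowerSeries

open PowerSeries in
theorem quadratic_eq_of_convolution_rec {R : Type*} [CommRing R] {γ : R} {a : ℕ → R}
    (h1 : a 1 = 1)
    (hrec : ∀ p : ℕ, 1 ≤ p → a p = a (p + 1) + γ * ∑ i ∈ Finset.range p, a (i + 1) * a (p - i)) :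
    C γ * X * (mk fun n ↦ a (n + 1)) ^ 2 + (1 - X) * (mk fun n ↦ a (n + 1)) = 1 := by
  set G : R⟦X⟧ := mk fun n ↦ a (n + 1)
  suffices h : X * (C γ * G ^ 2 - G) + G = 1 by linear_combination h
  ext (_ | n)
  · simp [G, h1]
  · have hsq : coeff n (G ^ 2) = ∑ i ∈ Finset.range (n + 1), a (i + 1) * a (n + 1 - i) := by
      rw [sq, coeff_mul,
        Finset.Nat.sum_antidiagonal_eq_sum_range_succ (fun i j ↦ coeff i G * coeff j G)]
      refine Finset.sum_congr rfl fun i hi ↦ ?_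
      rw [Finset.mem_range] at hi
      simp only [G, coeff_mk, Nat.sub_add_comm (Nat.lt_succ_iff.mp hi)]
    simp only [map_add, map_sub, coeff_succ_X_mul, coeff_C_mul, hsq, coeff_one, G, coeff_mk]
    simp only [Nat.succ_ne_zero, if_false]
    linear_combination -hrec (n + 1) (Nat.le_add_left 1 n)

open PowerSeries in
theorem three_term_rec_of_convolution_rec {K : Type*} [Field K] [CharZero K] {γ : K} {a : ℕ → K}
    (hγ : γ ≠ 0) (h1 : a 1 = 1)
    (hrec : ∀ p : ℕ, 1 ≤ p → a p = a (p + 1) + γ * ∑ i ∈ Finset.range p, a (i + 1) * a (p - i))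
    (n : ℕ) :
    ((n : K) + 3) * a (n + 3) = (1 - 2 * γ) * (2 * n + 3) * a (n + 2) - n * a (n + 1) := by
  set G : K⟦X⟧ := mk fun n ↦ a (n + 1)
  set Y : K⟦X⟧ := 1 - X + C (2 * γ) * (X * G)
  have hY : Y ^ 2 = 1 - 2 * C (1 - 2 * γ) * X + X ^ 2 := by
    simp only [Y, map_sub, map_one, map_mul, map_ofNat]
    linear_combination (4 * C γ * X) * quadratic_eq_of_convolution_rec h1 hrec
  have hcoeff : ∀ k, coeff (k + 2) Y = 2 * γ * a (k + 2) := fun k ↦ by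
    simp only [Y, G, map_add, map_sub, coeff_C_mul, coeff_succ_X_mul, coeff_mk, coeff_X, coeff_one]
    simp
  have hcoeff' : (n : K) * coeff (n + 1) Y = n * (2 * γ * a (n + 1)) := by
    rcases n with _ | m
    · simp
    · rw [hcoeff]
  have key := coeff_recurrence_of_sq_eq hY n
  rw [hcoeff, hcoeff, hcoeff'] at key
  apply mul_left_cancel₀ (mul_ne_zero two_ne_zero hγ)
  linear_combination key

theorem exists_nonpos_of_le_two_mul_sub {x : ℕ → ℝ} {b c : ℝ} (hbc : b ^ 2 < c)
    (h : ∀ n, x (n + 2) ≤ 2 * b * x (n + 1) - c * x n) : ∃ n, x n ≤ 0 := by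
  by_contra! hx
  set r : ℕ → ℝ := fun n ↦ x (n + 1) / x n
  have hr : ∀ n, 0 < r n := fun n ↦ div_pos (hx _) (hx _)
  have hδ : 0 < c - b ^ 2 := sub_pos.mpr hbc
  have hstep : ∀ n, r (n + 1) ≤ r n - (c - b ^ 2) / r n := fun n ↦ by
    have hle : r (n + 1) ≤ 2 * b - c / r n := by
      have hx₁ := (hx (n + 1)).ne'
      have hx₀ := (hx n).ne'
      rw [show 2 * b - c / r n = (2 * b * x (n + 1) - c * x n) / x (n + 1) by
        simp only [r]; field_simp]
      exact div_le_div_of_nonneg_right (h n) (hx _).le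
    have hsq : 2 * b - c / r n ≤ r n - (c - b ^ 2) / r n := by
      have := (hr n).ne'
      rw [← sub_nonneg, show r n - (c - b ^ 2) / r n - (2 * b - c / r n) = (r n - b) ^ 2 / r n by
        field_simp; ring]
      exact div_nonneg (sq_nonneg _) (hr n).le
    exact hle.trans hsq
  have hdecay : ∀ n : ℕ, r n ≤ r 0 - n * ((c - b ^ 2) / r 0) := by
    intro n
    induction n with
    | zero => simp
    | succ n ih =>
      have hle0 : r n ≤ r 0 :=
        ih.trans (sub_le_self _ (mul_nonneg n.cast_nonneg (div_pos hδ (hr 0)).le))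
      have : (c - b ^ 2) / r 0 ≤ (c - b ^ 2) / r n := div_le_div_of_nonneg_left hδ.le (hr n) hle0
      push_cast
      linarith [hstep n]
  obtain ⟨n, hn⟩ := exists_nat_gt (r 0 / ((c - b ^ 2) / r 0))
  have := (div_lt_iff₀ (div_pos hδ (hr 0))).mp hn
  linarith [hdecay n, hr n]

section ThreeTermRecurrence

variable {t : ℝ} {x : ℕ → ℝ}

theorem pos_of_three_term_rec
    (hrec : ∀ n : ℕ, ((n : ℝ) + 3) * x (n + 3) = t * (2 * n + 3) * x (n + 2) - n * x (n + 1))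
    (hx : ∀ n, 1 ≤ n → 0 ≤ x n) (h1 : 0 < x 1) (h2 : 0 < x 2) (n : ℕ) (hn : 1 ≤ n) :
    0 < x n := by
  suffices h : ∀ n, 0 < x (n + 1) ∧ 0 < x (n + 2) by
    obtain ⟨m, rfl⟩ := Nat.exists_eq_add_of_le' hn
    exact (h m).1
  intro n
  induction n with
  | zero => exact ⟨h1, h2⟩
  | succ n ih =>
    refine ⟨ih.2, (hx (n + 3) (by omega)).lt_of_ne' fun h0 ↦ ?_⟩
    -- a zero at `n + 3` would force `x (n + 4) < 0`
    have h := hrec (n + 1)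
    rw [h0] at h
    push_cast at h
    nlinarith [hx (n + 4) (by omega), ih.2]

theorem le_two_mul_sub_of_three_term_rec {c : ℝ}
    (hrec : ∀ n : ℕ, ((n : ℝ) + 3) * x (n + 3) = t * (2 * n + 3) * x (n + 2) - n * x (n + 1))
    {m : ℕ} (hm : c * (m + 3) ≤ m) (h1 : 0 ≤ x (m + 1)) (h2 : 0 ≤ x (m + 2)) :
    x (m + 3) ≤ 2 * |t| * x (m + 2) - c * x (m + 1) := by
  have hm3 : (0 : ℝ) < m + 3 := by positivity
  have ht : t * (2 * m + 3) ≤ 2 * |t| * (m + 3) := by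
    nlinarith [le_abs_self t, abs_nonneg t, (m.cast_nonneg : (0 : ℝ) ≤ m)]
  refine le_of_mul_le_mul_left ?_ hm3
  rw [hrec m]
  nlinarith [mul_le_mul_of_nonneg_right ht h2, mul_le_mul_of_nonneg_right hm h1]

theorem exists_neg_of_three_term_rec (ht : |t| < 1)
    (hrec : ∀ n : ℕ, ((n : ℝ) + 3) * x (n + 3) = t * (2 * n + 3) * x (n + 2) - n * x (n + 1))
    (h1 : 0 < x 1) (h2 : 0 < x 2) : ∃ n, 1 ≤ n ∧ x n < 0 := by
  by_contra! hx
  have hpos := pos_of_three_term_rec hrec hx h1 h2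
  have ht2 : t ^ 2 < 1 := (sq_lt_one_iff_abs_lt_one t).mpr ht
  set c := (1 + t ^ 2) / 2 with hc_def
  have htc : |t| ^ 2 < c := by rw [sq_abs]; linarith
  have hc : c < 1 := by linarith
  obtain ⟨N, hN⟩ := exists_nat_gt (3 * c / (1 - c))
  have hcN : ∀ k : ℕ, c * ((N + k : ℕ) + 3) ≤ (N + k : ℕ) := fun k ↦ by
    rw [div_lt_iff₀ (sub_pos.mpr hc)] at hN
    push_cast
    nlinarith [(k.cast_nonneg : (0 : ℝ) ≤ k)]
  obtain ⟨k, hk⟩ := exists_nonpos_of_le_two_mul_sub (x := fun k ↦ x (N + k + 1)) htc fun k ↦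
    le_two_mul_sub_of_three_term_rec hrec (hcN k) (hpos _ (by omega)).le (hpos _ (by omega)).le
  exact (hpos (N + k + 1) (by omega)).not_ge hk

end ThreeTermRecurrence

/-- For every `γ` with `0 < γ < 1`, there exists `p ≥ 1` such that
`C_p(0,γ) < 0`, where `C_p(0,γ)` is defined by `C_1(0,γ) = 1` and the recursion
`C_p(0,γ) = C_{p+1}(0,γ) + γ ∑_{i=0}^{p-1} C_{i+1}(0,γ) C_{p-i}(0,γ)`. -/
theorem exists_negative_C_at_lambda_zero
    (γ : ℝ) (hγ0 : 0 < γ) (hγ1 : γ < 1)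
    (C : ℕ → ℝ)
    (hC1 : C 1 = 1)
    (hrec : ∀ p : ℕ, 1 ≤ p →
      C p = C (p+1) + γ * ∑ i ∈ Finset.range p, C (i+1) * C (p - i)) :
    ∃ p : ℕ, 1 ≤ p ∧ C p < 0 := by
  have hC2 : C 2 = 1 - γ := by
    have h := hrec 1 le_rfl
    simp only [Finset.sum_range_one, hC1] at h
    linarith
  exact exists_neg_of_three_term_rec (t := 1 - 2 * γ) (abs_lt.mpr ⟨by linarith, by linarith⟩)
    (three_term_rec_of_convolution_rec hγ0.ne' hC1 hrec) (by rw [hC1]; norm_num)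
    (by rw [hC2]; linarith)
end

section
/- Let K be a nonempty compact subset of (0, λ_c] × (0, 1]. Then there exists α ≥ 1 such that the function (λ, γ) ↦ λγ^α attains its maximum on K at a unique point. -/
open Real Set

/-!
Write `f_α(λ, γ) = λ γ^α`. If `α < β`, `z` maximizes `f_α` and `w` maximizes `f_β` on `K`, then
`γ(z) ≤ γ(w)`: otherwise, as `f_β = f_α · γ^(β - α)`, the point `z` would beat `w` for `f_β`.
So whenever `f_α` has two maximizers, which then have different `γ`, a rational strictly
between their `γ`-coordinates is strictly increasing in `α`. Hence only countably many exponents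
admit several maximizers, and some `α ≥ 1` does not.
-/

variable {K : Set (ℝ × ℝ)}

lemma snd_le_snd_of_isMaxOn (hK : K ⊆ Ioi 0 ×ˢ Ioi 0) {α β : ℝ} (hαβ : α < β)
    {z w : ℝ × ℝ} (hz : z ∈ K) (hw : w ∈ K)
    (hzmax : IsMaxOn (fun p : ℝ × ℝ => p.1 * p.2 ^ α) K z)
    (hwmax : IsMaxOn (fun p : ℝ × ℝ => p.1 * p.2 ^ β) K w) :
    z.2 ≤ w.2 := by
  have split : ∀ p ∈ K, p.1 * p.2 ^ β = p.1 * p.2 ^ α * p.2 ^ (β - α) := fun p hp => by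
    rw [mul_assoc, ← rpow_add (hK hp).2, add_sub_cancel]
  obtain ⟨hw1, hw2⟩ := hK hw
  by_contra! hlt
  have : w.1 * w.2 ^ β < w.1 * w.2 ^ β := calc
    w.1 * w.2 ^ β = w.1 * w.2 ^ α * w.2 ^ (β - α) := split w hw
    _ < w.1 * w.2 ^ α * z.2 ^ (β - α) :=
      mul_lt_mul_of_pos_left (rpow_lt_rpow hw2.le hlt (sub_pos.2 hαβ))
        (mul_pos hw1 (rpow_pos_of_pos hw2 α))
    _ ≤ z.1 * z.2 ^ α * z.2 ^ (β - α) :=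
      mul_le_mul_of_nonneg_right (hzmax hw) (rpow_nonneg (hK hz).2.le _)
    _ = z.1 * z.2 ^ β := (split z hz).symm
    _ ≤ w.1 * w.2 ^ β := hwmax hz
  exact this.false

lemma eq_of_isMaxOn_of_snd_eq {α : ℝ} {z w : ℝ × ℝ} (hz : z ∈ K) (hw : w ∈ K) (hz2 : 0 < z.2)
    (hzmax : IsMaxOn (fun p : ℝ × ℝ => p.1 * p.2 ^ α) K z)
    (hwmax : IsMaxOn (fun p : ℝ × ℝ => p.1 * p.2 ^ α) K w) (h : z.2 = w.2) :
    z = w := by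
  have hval : z.1 * z.2 ^ α = w.1 * w.2 ^ α := le_antisymm (hwmax hz) (hzmax hw)
  rw [← h] at hval
  exact Prod.ext (mul_right_cancel₀ (rpow_pos_of_pos hz2 α).ne' hval) h

theorem countable_setOf_exists_isMaxOn_snd_lt (hK : K ⊆ Ioi 0 ×ˢ Ioi 0) :
    {α : ℝ | ∃ z ∈ K, ∃ w ∈ K, IsMaxOn (fun p : ℝ × ℝ => p.1 * p.2 ^ α) K z ∧
      IsMaxOn (fun p : ℝ × ℝ => p.1 * p.2 ^ α) K w ∧ z.2 < w.2}.Countable := by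
  set S := {α : ℝ | ∃ z ∈ K, ∃ w ∈ K, IsMaxOn (fun p : ℝ × ℝ => p.1 * p.2 ^ α) K z ∧
      IsMaxOn (fun p : ℝ × ℝ => p.1 * p.2 ^ α) K w ∧ z.2 < w.2}
  choose z hz w hw hzmax hwmax hlt using fun α : S => α.2
  choose q hzq hqw using fun α : S => exists_rat_btwn (hlt α)
  have hq : StrictMono q := fun α β hαβ => by
    have := snd_le_snd_of_isMaxOn hK hαβ (hw α) (hz β) (hwmax α) (hzmax β)
    exact_mod_cast (hqw α).trans_le this |>.trans (hzq β)
  exact Set.countable_coe_iff.1 hq.injective.countable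

theorem countable_setOf_exists_isMaxOn_ne (hK : K ⊆ Ioi 0 ×ˢ Ioi 0) :
    {α : ℝ | ∃ z ∈ K, ∃ w ∈ K, z ≠ w ∧ IsMaxOn (fun p : ℝ × ℝ => p.1 * p.2 ^ α) K z ∧
      IsMaxOn (fun p : ℝ × ℝ => p.1 * p.2 ^ α) K w}.Countable := by
  refine (countable_setOf_exists_isMaxOn_snd_lt hK).mono ?_
  rintro α ⟨z, hz, w, hw, hne, hzmax, hwmax⟩
  rcases lt_or_gt_of_ne (mt (eq_of_isMaxOn_of_snd_eq hz hw (hK hz).2 hzmax hwmax) hne) with h | h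
  · exact ⟨z, hz, w, hw, hzmax, hwmax, h⟩
  · exact ⟨w, hw, z, hz, hwmax, hzmax, h⟩

/-- Let `K` be a nonempty compact subset of `(0, λ_c] × (0, 1]`, where
`λ_c = 1/(12√3)`.  Then there exists `α ≥ 1` such that the function
`(λ, γ) ↦ λ·γ^α` attains its maximum on `K` at a unique point. -/
theorem exists_unique_maximizer_of_compact
    (K : Set (ℝ × ℝ)) (hK : IsCompact K) (hKne : K.Nonempty)
    (hKsub : K ⊆ Ioc (0:ℝ) (1 / (12 * Real.sqrt 3)) ×ˢ Ioc (0:ℝ) 1) :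
    ∃ α : ℝ, 1 ≤ α ∧
      ∃! z : ℝ × ℝ, z ∈ K ∧ ∀ w ∈ K, w.1 * w.2 ^ α ≤ z.1 * z.2 ^ α := by
  have hpos : K ⊆ Ioi 0 ×ˢ Ioi 0 := hKsub.trans (prod_mono Ioc_subset_Ioi_self Ioc_subset_Ioi_self)
  obtain ⟨α, hα, hα1⟩ := ((countable_setOf_exists_isMaxOn_ne hpos).dense_compl ℝ).exists_mem_open
    isOpen_Ioi nonempty_Ioi
  have hcont : ContinuousOn (fun p : ℝ × ℝ => p.1 * p.2 ^ α) K :=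
    continuousOn_fst.mul <| continuousOn_snd.rpow_const fun p hp => .inl (hpos hp).2.ne'
  obtain ⟨z, hz, hzmax⟩ := hK.exists_isMaxOn hKne hcont
  exact ⟨α, le_of_lt hα1, z, ⟨hz, hzmax⟩, fun w ⟨hw, hwmax⟩ =>
    by_contra fun hne => hα ⟨w, hw, z, hz, hne, hwmax, hzmax⟩⟩
end

section
/- Let (Λ, Γ) be a random variable on a compact set K ⊂ [0,1]^2, let (λ_0, γ_0) ∈ K be the unique maximizer on K of (λ,γ) ↦ λγ^α for some α ≥ 1 with λ_0 γ_0^α > 0, and let F : [0,1]^2 → ℝ be continuous with F(λ_0, γ_0) < 0. Then for v sufficiently large, E[ Λ^v Γ^{⌊αv⌋} F(Λ, Γ) ] < 0. -/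
open MeasureTheory Real Set
open Filter Asymptotics

/-!
On `[0,1]²` the weight `Λ^v Γ^{⌊αv⌋}` is squeezed between `(ΛΓ^α)^v` and `(ΛΓ^α)^{v-1}`.
Pick `a < λ₀γ₀^α` so large that the open set `U'` where `ΛΓ^α > a` and `F < -c` contains `(λ₀, γ₀)`,
and `r < a` bounding `ΛΓ^α` on the compact part of `K` where `F ≥ -c` (this uses uniqueness of the
maximizer). Since `(Λ, Γ)` charges `U'` with some mass `p > 0` and `|F| ≤ C` on `K`, the
expectation is at most `C r^{v-1} - c p a^v`, which is negative for large `v`.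
-/

lemma IsCompact.exists_lt_forall_diff_le {E : Type*} [TopologicalSpace E] {K U : Set E}
    (hK : IsCompact K) (hU : IsOpen U) {f : E → ℝ} (hf : ContinuousOn f K) {z₀ : E}
    (hz₀ : z₀ ∈ U) (hmax : ∀ w ∈ K, w ≠ z₀ → f w < f z₀) :
    ∃ r < f z₀, ∀ w ∈ K \ U, f w ≤ r := by
  rcases (K \ U).eq_empty_or_nonempty with hempty | hne
  · exact ⟨f z₀ - 1, by linarith, by simp [hempty]⟩
  obtain ⟨w₁, hw₁, hw₁max⟩ := (hK.diff hU).exists_isMaxOn hne (hf.mono sdiff_subset)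
  exact ⟨f w₁, hmax w₁ hw₁.1 (ne_of_mem_of_not_mem hz₀ hw₁.2).symm, fun w hw => hw₁max hw⟩

lemma eventually_mul_pow_lt_mul_pow {r a d : ℝ} (hr : 0 ≤ r) (hra : r < a) (hd : 0 < d) (C : ℝ) :
    ∀ᶠ n : ℕ in atTop, C * r ^ n < d * a ^ n := by
  filter_upwards [((isLittleO_pow_pow_of_lt_left hr hra).const_mul_left C).def (half_pos hd)]
    with n hn
  have ha : 0 < a ^ n := pow_pos (hr.trans_lt hra) n
  rw [norm_of_nonneg ha.le, Real.norm_eq_abs] at hn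
  linarith [le_abs_self (C * r ^ n), mul_lt_mul_of_pos_right (half_lt_self hd) ha]

lemma integral_le_sub_measureReal_mul_of_ae_le {Ω : Type*} [MeasurableSpace Ω] {μ : Measure Ω}
    [IsProbabilityMeasure μ] {g : Ω → ℝ} (hg : Integrable g μ) {A : Set Ω} (hA : MeasurableSet A)
    {B D : ℝ} (h : ∀ᵐ ω ∂μ, g ω ≤ B - A.indicator (fun _ => D) ω) :
    ∫ ω, g ω ∂μ ≤ B - μ.real A * D := by
  calc ∫ ω, g ω ∂μ ≤ ∫ ω, (B - A.indicator (fun _ => D) ω) ∂μ :=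
        integral_mono_ae hg ((integrable_const B).sub ((integrable_const D).indicator hA)) h
    _ = B - μ.real A * D := by
        rw [integral_sub (integrable_const B) ((integrable_const D).indicator hA),
          integral_indicator_const D hA, integral_const, probReal_univ, one_smul, smul_eq_mul]

lemma Continuous.integrable_comp_of_ae_mem_compact {Ω E : Type*} [MeasurableSpace Ω]
    {μ : Measure Ω} [IsFiniteMeasure μ] [TopologicalSpace E] [MeasurableSpace E]
    [OpensMeasurableSpace E] {G : E → ℝ} (hG : Continuous G) {X : Ω → E} (hX : Measurable X)
    {K : Set E} (hK : IsCompact K) (hXK : ∀ᵐ ω ∂μ, X ω ∈ K) :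
    Integrable (fun ω => G (X ω)) μ := by
  obtain ⟨C, hC⟩ := hK.exists_bound_of_continuousOn hG.continuousOn
  exact .of_bound (hG.measurable.comp hX).aestronglyMeasurable C
    (hXK.mono fun ω hω => hC _ hω)

lemma mul_rpow_pow_eq {y : ℝ} (x : ℝ) (hy : 0 ≤ y) (α : ℝ) (n : ℕ) :
    (x * y ^ α) ^ n = x ^ n * y ^ (α * n) := by
  rw [mul_pow, ← rpow_natCast (y ^ α), ← rpow_mul hy]

noncomputable def weight (α : ℝ) (v : ℕ) (w : ℝ × ℝ) : ℝ := w.1 ^ v * w.2 ^ ⌊α * v⌋₊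

section weight

variable {α : ℝ} {w : ℝ × ℝ}

lemma weight_nonneg (hw : w ∈ Icc (0:ℝ) 1 ×ˢ Icc (0:ℝ) 1) (v : ℕ) : 0 ≤ weight α v w :=
  mul_nonneg (pow_nonneg hw.1.1 v) (pow_nonneg hw.2.1 _)

lemma pow_le_weight (hw : w ∈ Icc (0:ℝ) 1 ×ˢ Icc (0:ℝ) 1) (hα : 0 ≤ α) (v : ℕ) :
    (w.1 * w.2 ^ α) ^ v ≤ weight α v w := by
  rw [mul_rpow_pow_eq _ hw.2.1, weight, ← rpow_natCast w.2 ⌊α * v⌋₊]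
  exact mul_le_mul_of_nonneg_left
    (rpow_le_rpow_of_exponent_ge' hw.2.1 hw.2.2 (Nat.cast_nonneg _) (Nat.floor_le (by positivity)))
    (pow_nonneg hw.1.1 v)

lemma weight_succ_le (hw : w ∈ Icc (0:ℝ) 1 ×ˢ Icc (0:ℝ) 1) (hα : 1 ≤ α) (n : ℕ) :
    weight α (n + 1) w ≤ (w.1 * w.2 ^ α) ^ n := by
  have hfloor : α * n ≤ ⌊α * (n + 1 : ℕ)⌋₊ := by
    have := Nat.sub_one_lt_floor (α * (n + 1 : ℕ))
    push_cast at this ⊢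
    linarith
  rw [mul_rpow_pow_eq _ hw.2.1, weight, ← rpow_natCast w.2 ⌊α * (n + 1 : ℕ)⌋₊]
  exact mul_le_mul (pow_le_pow_of_le_one hw.1.1 hw.1.2 n.le_succ)
    (rpow_le_rpow_of_exponent_ge' hw.2.1 hw.2.2 (by positivity) hfloor)
    (rpow_nonneg hw.2.1 _) (pow_nonneg hw.1.1 n)

lemma weight_mul_le {a c r C : ℝ} {F : ℝ × ℝ → ℝ} (hw : w ∈ Icc (0:ℝ) 1 ×ˢ Icc (0:ℝ) 1)
    (hα : 1 ≤ α) (ha : 0 ≤ a) (hc : 0 ≤ c) (hr : 0 ≤ r) (hFC : |F w| ≤ C)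
    (hoff : -c ≤ F w → w.1 * w.2 ^ α ≤ r) (n : ℕ) :
    weight α (n + 1) w * F w ≤
      C * r ^ n - ({w | a < w.1 * w.2 ^ α} ∩ {w | F w < -c}).indicator
        (fun _ => c * a ^ (n + 1)) w := by
  have hweight := weight_nonneg (α := α) hw (n + 1)
  have hCr : 0 ≤ C * r ^ n := mul_nonneg ((abs_nonneg _).trans hFC) (pow_nonneg hr n)
  by_cases hFc : F w < -c
  · by_cases hφ : a < w.1 * w.2 ^ α
    · have hlow : a ^ (n + 1) ≤ weight α (n + 1) w :=
        (pow_le_pow_left₀ ha hφ.le _).trans (pow_le_weight hw (by linarith) _)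
      rw [indicator_of_mem
        (show w ∈ {w : ℝ × ℝ | a < w.1 * w.2 ^ α} ∩ {w | F w < -c} from ⟨hφ, hFc⟩)]
      nlinarith [mul_le_mul_of_nonneg_left hFc.le hweight]
    · rw [indicator_of_notMem fun h => hφ h.1, sub_zero]
      nlinarith [mul_le_mul_of_nonneg_left hFc.le hweight]
  · rw [indicator_of_notMem fun h => hFc h.2, sub_zero]
    have hup : weight α (n + 1) w ≤ r ^ n :=
      (weight_succ_le hw hα n).trans
        (pow_le_pow_left₀ (mul_nonneg hw.1.1 (rpow_nonneg hw.2.1 α)) (hoff (not_lt.1 hFc)) n)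
    calc weight α (n + 1) w * F w ≤ r ^ n * C :=
          (le_abs_self _).trans (by rw [abs_mul, abs_of_nonneg hweight]; gcongr)
      _ = C * r ^ n := mul_comm _ _

end weight

/-- Let `(Λ, Γ) = X` be a random variable whose law has compact
support `K ⊆ [0,1]²`, let `(λ₀, γ₀) ∈ K` be the unique maximizer on `K` of
`(λ,γ) ↦ λγ^α` for some `α ≥ 1`, with `λ₀γ₀^α > 0`, and let `F : [0,1]² → ℝ` be
continuous with `F(λ₀, γ₀) < 0`.  Then for `v` sufficiently large,
`E[Λ^v Γ^{⌊αv⌋} F(Λ, Γ)] < 0`. -/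
theorem expectation_eventually_negative
    {Ω : Type*} [MeasureSpace Ω] [IsProbabilityMeasure (volume : Measure Ω)]
    (X : Ω → ℝ × ℝ) (hX : Measurable X)
    (K : Set (ℝ × ℝ)) (hK : IsCompact K) (hKsub : K ⊆ Icc (0:ℝ) 1 ×ˢ Icc (0:ℝ) 1)
    (hsupp : ∀ᵐ ω, X ω ∈ K)
    (hfull : ∀ U : Set (ℝ × ℝ), IsOpen U → (U ∩ K).Nonempty → 0 < volume (X ⁻¹' U))
    (α : ℝ) (hα : 1 ≤ α)
    (z₀ : ℝ × ℝ) (hz₀K : z₀ ∈ K)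
    (hmax : ∀ w ∈ K, w.1 * w.2 ^ α ≤ z₀.1 * z₀.2 ^ α)
    (huniq : ∀ w ∈ K, w.1 * w.2 ^ α = z₀.1 * z₀.2 ^ α → w = z₀)
    (hpos : 0 < z₀.1 * z₀.2 ^ α)
    (F : ℝ × ℝ → ℝ) (hF : Continuous F) (hFneg : F z₀ < 0) :
    ∃ V : ℕ, ∀ v : ℕ, V ≤ v →
      ∫ ω, (X ω).1 ^ v * (X ω).2 ^ (Nat.floor (α * v)) * F (X ω) < 0 := by
  have hφ : Continuous fun w : ℝ × ℝ => w.1 * w.2 ^ α :=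
    continuous_fst.mul (continuous_snd.rpow_const fun _ => Or.inr (zero_le_one.trans hα))
  set c := -F z₀ / 2 with hc
  have hc0 : 0 < c := by linarith
  have hz₀U : F z₀ < -c := by linarith
  have hU : IsOpen {w | F w < -c} := isOpen_lt hF continuous_const
  obtain ⟨r, hr, hrK⟩ := hK.exists_lt_forall_diff_le hU hφ.continuousOn
    hz₀U fun w hw hne => (hmax w hw).lt_of_ne (mt (huniq w hw) hne)
  set a := (max r 0 + z₀.1 * z₀.2 ^ α) / 2 with ha
  have hr₀ := max_lt hr hpos
  have hra : max r 0 < a := by linarith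
  have haz₀ : a < z₀.1 * z₀.2 ^ α := by linarith
  have ha0 : 0 < a := (le_max_right r 0).trans_lt hra
  set U' : Set (ℝ × ℝ) := {w | a < w.1 * w.2 ^ α} ∩ {w | F w < -c}
  have hU' : IsOpen U' := (isOpen_lt continuous_const hφ).inter hU
  set p := volume.real (X ⁻¹' U')
  have hp : 0 < p := ENNReal.toReal_pos
    (hfull _ hU' ⟨z₀, mem_inter haz₀ hz₀U, hz₀K⟩).ne' (measure_ne_top _ _)
  obtain ⟨C, hC⟩ := hK.exists_bound_of_continuousOn hF.continuousOn
  obtain ⟨N, hN⟩ := eventually_atTop.1 (eventually_mul_pow_lt_mul_pow (le_max_right r 0) hra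
    (mul_pos (mul_pos hc0 hp) ha0) C)
  refine ⟨N + 1, fun v hv => ?_⟩
  obtain ⟨n, rfl⟩ : ∃ n, v = n + 1 := ⟨v - 1, by omega⟩
  calc ∫ ω, weight α (n + 1) (X ω) * F (X ω)
      ≤ C * max r 0 ^ n - p * (c * a ^ (n + 1)) :=
        integral_le_sub_measureReal_mul_of_ae_le
          (((continuous_fst.pow _).mul (continuous_snd.pow _)).mul hF
            |>.integrable_comp_of_ae_mem_compact hX hK hsupp)
          (hX hU'.measurableSet)
          (hsupp.mono fun ω hω => weight_mul_le (hKsub hω) hα ha0.le hc0.le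
            (le_max_right r 0) (hC _ hω)
            (fun h => (hrK _ ⟨hω, not_lt.2 h⟩).trans (le_max_left r 0)) n)
    _ < 0 := by rw [pow_succ]; linarith [hN n (by omega)]
end

section
/- Let Γ be a random variable with values in [0,1] such that E[Γ^k (1−Γ)(1−2Γ)] ≥ 0 for all k ≥ 1. Then the support of Γ is contained in [0, 1/2] ∪ {1}. -/
/-!
On `[0, 1]` the polynomial `x ^ k * (1 - x) * (1 - 2 * x)` is at most `(1/2)^k`, and on an interval
`[a, b] ⊂ (1/2, 1)` it is at most `-(1 - b)(2a - 1) a ^ k`. If `Γ` charged such an interval with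
mass `p > 0`, the `k`-th moment would be at most `(1/2)^k - (1 - b)(2a - 1) p a ^ k`, which is
negative for large `k` because `a > 1/2`. Covering `(1/2, 1)` by countably many such intervals with
rational endpoints shows that `Γ` almost surely avoids `(1/2, 1)`.
-/

open MeasureTheory Filter Set

def momentPoly (k : ℕ) (x : ℝ) : ℝ := x ^ k * (1 - x) * (1 - 2 * x)

section momentPoly

variable {k : ℕ} {a b x : ℝ}

lemma abs_momentPoly_le_one (hx : x ∈ Icc 0 1) : |momentPoly k x| ≤ 1 := by
  obtain ⟨hx0, hx1⟩ := hx
  have hpow : |x ^ k| ≤ 1 := by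
    rw [abs_of_nonneg (pow_nonneg hx0 k)]
    exact pow_le_one₀ hx0 hx1
  have hquad : |(1 - x) * (1 - 2 * x)| ≤ 1 := by
    rw [abs_le]; constructor <;> nlinarith
  calc |momentPoly k x| = |x ^ k| * |(1 - x) * (1 - 2 * x)| := by
        rw [momentPoly, mul_assoc, abs_mul]
    _ ≤ 1 * 1 := mul_le_mul hpow hquad (abs_nonneg _) zero_le_one
    _ = 1 := one_mul 1

lemma momentPoly_le_half_pow (hx : x ∈ Icc 0 1) : momentPoly k x ≤ (1 / 2) ^ k := by
  obtain ⟨hx0, hx1⟩ := hx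
  rcases le_total x (1 / 2) with hle | hge
  · calc momentPoly k x = x ^ k * ((1 - x) * (1 - 2 * x)) := mul_assoc _ _ _
      _ ≤ (1 / 2) ^ k * 1 := by
          gcongr
          · nlinarith
          · nlinarith
      _ = (1 / 2) ^ k := mul_one _
  · calc momentPoly k x ≤ 0 :=
          mul_nonpos_of_nonneg_of_nonpos (mul_nonneg (pow_nonneg hx0 k) (by linarith))
            (by linarith)
      _ ≤ (1 / 2) ^ k := by positivity

lemma momentPoly_le_neg_of_mem_Icc (ha : 1 / 2 ≤ a) (hb : b ≤ 1) (hx : x ∈ Icc a b) :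
    momentPoly k x ≤ -((1 - b) * (2 * a - 1) * a ^ k) := by
  obtain ⟨hax, hxb⟩ := hx
  have hgap : (1 - b) * (2 * a - 1) ≤ (1 - x) * (2 * x - 1) := by
    apply mul_le_mul <;> linarith
  have hpow : a ^ k ≤ x ^ k := pow_le_pow_left₀ (by linarith) hax k
  have : (1 - b) * (2 * a - 1) * a ^ k ≤ (1 - x) * (2 * x - 1) * x ^ k :=
    mul_le_mul hgap hpow (by positivity) (mul_nonneg (by linarith) (by linarith))
  unfold momentPoly
  linarith

lemma momentPoly_le_sub_indicator (ha : 1 / 2 ≤ a) (hb : b ≤ 1) (hx : x ∈ Icc 0 1) :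
    momentPoly k x ≤
      (1 / 2) ^ k - (Icc a b).indicator (fun _ => (1 - b) * (2 * a - 1) * a ^ k) x := by
  by_cases hab : x ∈ Icc a b
  · rw [indicator_of_mem hab]
    have : 0 ≤ (1 / 2 : ℝ) ^ k := by positivity
    linarith [momentPoly_le_neg_of_mem_Icc (k := k) ha hb hab]
  · rw [indicator_of_notMem hab, sub_zero]
    exact momentPoly_le_half_pow hx

end momentPoly

section Moments

variable {Ω : Type*} [MeasurableSpace Ω] {μ : Measure Ω} [IsProbabilityMeasure μ]
  {X : Ω → ℝ} {a b : ℝ}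

lemma integrable_momentPoly (hX : Measurable X) (hrange : ∀ᵐ ω ∂μ, X ω ∈ Icc 0 1) (k : ℕ) :
    Integrable (fun ω => momentPoly k (X ω)) μ := by
  refine .of_bound (by unfold momentPoly; fun_prop) 1 ?_
  filter_upwards [hrange] with ω hω
  exact abs_momentPoly_le_one hω

lemma integral_momentPoly_le (hX : Measurable X) (hrange : ∀ᵐ ω ∂μ, X ω ∈ Icc 0 1)
    (ha : 1 / 2 ≤ a) (hb : b ≤ 1) (k : ℕ) :
    ∫ ω, momentPoly k (X ω) ∂μ ≤
      (1 / 2) ^ k - (1 - b) * (2 * a - 1) * a ^ k * μ.real (X ⁻¹' Icc a b) := by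
  have hmeas : MeasurableSet (X ⁻¹' Icc a b) := hX measurableSet_Icc
  have hind : Integrable ((X ⁻¹' Icc a b).indicator
      fun _ => (1 - b) * (2 * a - 1) * a ^ k) μ := (integrable_const _).indicator hmeas
  calc ∫ ω, momentPoly k (X ω) ∂μ
      ≤ ∫ ω, (1 / 2) ^ k - (X ⁻¹' Icc a b).indicator
          (fun _ => (1 - b) * (2 * a - 1) * a ^ k) ω ∂μ := by
        refine integral_mono_ae (integrable_momentPoly hX hrange k)
          ((integrable_const _).sub hind) ?_
        filter_upwards [hrange] with ω hω
        exact momentPoly_le_sub_indicator ha hb hω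
    _ = _ := by
        rw [integral_sub (integrable_const _) hind, integral_const, integral_indicator_const _ hmeas,
          probReal_univ, smul_eq_mul, smul_eq_mul, one_mul, mul_comm (μ.real _)]

lemma eventually_integral_momentPoly_neg (hX : Measurable X)
    (hrange : ∀ᵐ ω ∂μ, X ω ∈ Icc 0 1) (ha : 1 / 2 < a) (hb : b < 1)
    (hpos : 0 < μ.real (X ⁻¹' Icc a b)) :
    ∀ᶠ k in atTop, ∫ ω, momentPoly k (X ω) ∂μ < 0 := by
  set c := (1 - b) * (2 * a - 1) * μ.real (X ⁻¹' Icc a b)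
  have hc : 0 < c := mul_pos (mul_pos (by linarith) (by linarith)) hpos
  have ha0 : 0 < a := by linarith
  have hratio : (1 / 2) / a < 1 := (div_lt_one ha0).2 ha
  filter_upwards [(tendsto_pow_atTop_nhds_zero_of_lt_one (by positivity) hratio).eventually_lt_const
    hc] with k hk
  rw [div_pow, div_lt_iff₀ (pow_pos ha0 k)] at hk
  calc ∫ ω, momentPoly k (X ω) ∂μ ≤ (1 / 2) ^ k - c * a ^ k := by
        convert integral_momentPoly_le hX hrange ha.le hb.le k using 2; ring
    _ < 0 := by linarith

lemma ae_notMem_Icc_of_integral_momentPoly_nonneg (hX : Measurable X)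
    (hrange : ∀ᵐ ω ∂μ, X ω ∈ Icc 0 1)
    (hmom : ∀ k : ℕ, 1 ≤ k → 0 ≤ ∫ ω, momentPoly k (X ω) ∂μ) (ha : 1 / 2 < a) (hb : b < 1) :
    ∀ᵐ ω ∂μ, X ω ∉ Icc a b := by
  refine measure_eq_zero_iff_ae_notMem.1 ?_
  by_contra hne
  have hpos : 0 < μ.real (X ⁻¹' Icc a b) := ENNReal.toReal_pos hne (measure_ne_top _ _)
  obtain ⟨k, hneg, hk⟩ :=
    ((eventually_integral_momentPoly_neg hX hrange ha hb hpos).and (eventually_ge_atTop 1)).exists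
  exact (hmom k hk).not_gt hneg

lemma ae_notMem_Ioo_of_integral_momentPoly_nonneg (hX : Measurable X)
    (hrange : ∀ᵐ ω ∂μ, X ω ∈ Icc 0 1)
    (hmom : ∀ k : ℕ, 1 ≤ k → 0 ≤ ∫ ω, momentPoly k (X ω) ∂μ) :
    ∀ᵐ ω ∂μ, X ω ∉ Ioo (1 / 2) 1 := by
  have hall : ∀ᵐ ω ∂μ, ∀ q : ℚ × ℚ, 1 / 2 < (q.1 : ℝ) → (q.2 : ℝ) < 1 →
      X ω ∉ Icc (q.1 : ℝ) q.2 := by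
    refine ae_all_iff.2 fun q => ?_
    by_cases hq : 1 / 2 < (q.1 : ℝ) ∧ (q.2 : ℝ) < 1
    · filter_upwards [ae_notMem_Icc_of_integral_momentPoly_nonneg hX hrange hmom hq.1 hq.2]
        with ω hω _ _ using hω
    · exact ae_of_all _ fun ω h1 h2 => absurd ⟨h1, h2⟩ hq
  filter_upwards [hall] with ω hω ⟨hlo, hhi⟩
  obtain ⟨q₁, hlo₁, hq₁⟩ := exists_rat_btwn hlo
  obtain ⟨q₂, hq₂, hhi₂⟩ := exists_rat_btwn hhi
  exact hω (q₁, q₂) hlo₁ hhi₂ ⟨hq₁.le, hq₂.le⟩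

end Moments

/-- Let `Γ` be a random variable with values in `[0,1]` such that
`E[Γ^k (1-Γ)(1-2Γ)] ≥ 0` for all `k ≥ 1`.  Then the support of `Γ` is contained in
`[0, 1/2] ∪ {1}`, i.e. almost surely `Γ ≤ 1/2` or `Γ = 1`. -/
theorem support_in_half_union_one
    {Ω : Type*} [MeasureSpace Ω] [IsProbabilityMeasure (volume : Measure Ω)]
    (Γ : Ω → ℝ) (hmeas : Measurable Γ)
    (hrange : ∀ᵐ ω, Γ ω ∈ Set.Icc (0:ℝ) 1)
    (hmom : ∀ k : ℕ, 1 ≤ k → 0 ≤ ∫ ω, Γ ω ^ k * (1 - Γ ω) * (1 - 2 * Γ ω)) :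
    ∀ᵐ ω, Γ ω ≤ 1/2 ∨ Γ ω = 1 := by
  filter_upwards [hrange, ae_notMem_Ioo_of_integral_momentPoly_nonneg hmeas hrange hmom]
    with ω ⟨_, hle⟩ hnot
  by_contra! h
  exact hnot ⟨h.1, hle.lt_of_ne h.2⟩
end
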